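/- arXiv:math/0510585 — 4 statements merged into one kernel-verified Lean document; each statement's English description precedes it below -/
import Mathlib

section
/- The sequence f_n defined by H_n = ln n + γ + 1/(2n + f_n) is strictly monotonically decreasing in n ≥ 1. -/
/-!
Put `d n = H n - log n - γ`, so that `f n = 1 / d n - 2 n`. While `d n` and `d (n + 1)` are
positive, `f (n + 1) < f n` is equivalent to `d n - d (n + 1) < 2 d n d (n + 1)`, and
`d n - d (n + 1) = -log (1 - x) - x` with `x = 1 / (n + 1)`.

Both `d` and `a t = 1 / (2 t) - 1 / (12 t²)` tend to `0` and, for `n ≥ 2`, the increments of `a`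
are smaller than those of `d`, so telescoping gives `a n ≤ d n`. It then suffices that
`-log (1 - x) - x < 2 a n a (n + 1)`. Bounding `-log (1 - x)` by ten terms of its series turns
both comparisons into polynomial inequalities whose coefficients in `n - 2` are all positive.
The case `n = 1` follows from `d 2 ≥ a 2 = 11 / 48` and `log 2 ≈ 0.6931`.
-/

open Real Filter

noncomputable def H (n : ℕ) : ℝ := ∑ i ∈ Finset.range n, (1 : ℝ) / (i + 1)

noncomputable def f (n : ℕ) : ℝ := 1 / (H n - Real.log n - Real.eulerMascheroniConstant) - 2 * n

open Topology Finset

noncomputable def harmonicRemainder (n : ℕ) : ℝ := H n - log n - eulerMascheroniConstant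

/-- The first two terms of `H n - log n - γ = 1 / (2 n) - 1 / (12 n²) + 1 / (120 n⁴) - ⋯`. -/
noncomputable def remainderApprox (t : ℝ) : ℝ := 1 / (2 * t) - 1 / (12 * t ^ 2)

noncomputable def logSeries (N : ℕ) (x : ℝ) : ℝ := ∑ i ∈ range N, x ^ (i + 1) / (i + 1)

lemma H_eq_harmonic (n : ℕ) : H n = harmonic n := by
  simp [H, harmonic, one_div]

lemma tendsto_harmonicRemainder_atTop : Tendsto harmonicRemainder atTop (𝓝 0) := by
  have h := tendsto_harmonic_sub_log.sub_const eulerMascheroniConstant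
  rw [sub_self] at h
  exact h.congr fun n => by rw [harmonicRemainder, H_eq_harmonic]

lemma harmonicRemainder_one : harmonicRemainder 1 = 1 - eulerMascheroniConstant := by
  simp [harmonicRemainder, H]

lemma harmonicRemainder_sub_succ (n : ℕ) :
    harmonicRemainder n - harmonicRemainder (n + 1) = -log (1 - 1 / (n + 1)) - 1 / (n + 1) := by
  have hlog : log (1 - 1 / ((n : ℝ) + 1)) = log n - log (n + 1) := by
    rcases Nat.eq_zero_or_pos n with rfl | hn
    · simp
    · rw [show (1 : ℝ) - 1 / (n + 1) = n / (n + 1) by field_simp; ring,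
        log_div (by positivity) (by positivity)]
  simp only [harmonicRemainder, H, sum_range_succ, hlog]
  push_cast
  ring

lemma abs_logSeries_add_log_one_sub_le {x : ℝ} (hx₀ : 0 ≤ x) (hx : x ≤ 1 / 2) (N : ℕ) :
    |logSeries N x + log (1 - x)| ≤ 2 * x ^ (N + 1) := by
  have h := abs_log_sub_add_sum_range_le (x := x) (by rw [abs_of_nonneg hx₀]; linarith) N
  rw [abs_of_nonneg hx₀] at h
  refine h.trans ?_
  rw [div_le_iff₀ (by linarith)]
  nlinarith [pow_nonneg hx₀ (N + 1)]

lemma le_of_tendsto_of_sub_succ_le {u v : ℕ → ℝ} {l : ℝ} {N : ℕ}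
    (hu : Tendsto u atTop (𝓝 l)) (hv : Tendsto v atTop (𝓝 l))
    (h : ∀ n ≥ N, v n - v (n + 1) ≤ u n - u (n + 1)) {n : ℕ} (hn : N ≤ n) : v n ≤ u n := by
  have hanti : AntitoneOn (fun k => u k - v k) {k | N ≤ k} :=
    antitoneOn_nat_Ici_of_succ_le fun k hk => by linarith [h k hk]
  have hlim : Tendsto (fun k => u k - v k) atTop (𝓝 0) := by simpa using hu.sub hv
  have : 0 ≤ u n - v n :=
    le_of_tendsto hlim (eventually_atTop.2 ⟨n, fun k hk => hanti hn (hn.trans hk) hk⟩)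
  linarith

lemma tendsto_remainderApprox_atTop :
    Tendsto (fun n : ℕ => remainderApprox n) atTop (𝓝 0) := by
  have h₁ : Tendsto (fun t : ℝ => 1 / (2 * t)) atTop (𝓝 0) :=
    tendsto_const_nhds.div_atTop (tendsto_id.const_mul_atTop two_pos)
  have h₂ : Tendsto (fun t : ℝ => 1 / (12 * t ^ 2)) atTop (𝓝 0) :=
    tendsto_const_nhds.div_atTop ((tendsto_pow_atTop two_ne_zero).const_mul_atTop (by norm_num))
  have h := (h₁.sub h₂).comp tendsto_natCast_atTop_atTop
  rw [sub_zero] at h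
  exact h

lemma remainderApprox_pos {t : ℝ} (ht : 1 / 6 < t) : 0 < remainderApprox t := by
  have ht₀ : 0 < t := by linarith
  have : remainderApprox t = (6 * t - 1) / (12 * t ^ 2) := by
    unfold remainderApprox; field_simp; ring
  rw [this]
  exact div_pos (by linarith) (by positivity)

lemma remainderApprox_sub_succ_le_logSeries {t : ℝ} (ht : 2 ≤ t) :
    remainderApprox t - remainderApprox (t + 1) ≤
      logSeries 10 (1 / (t + 1)) - 2 * (1 / (t + 1)) ^ 11 - 1 / (t + 1) := by
  obtain ⟨s, hs, rfl⟩ : ∃ s ≥ 0, t = s + 2 := ⟨t - 2, by linarith, by ring⟩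
  have h₁ : 0 < s + 2 := by positivity
  have h₂ : 0 < s + 3 := by positivity
  simp only [remainderApprox, logSeries, sum_range_succ, sum_range_zero]
  norm_num
  rw [← sub_nonneg]
  field_simp
  ring_nf
  positivity

-- At `t = 2` the two sides differ by only about `1.3e-5`, hence the ten terms of the series.
lemma logSeries_lt_two_mul_remainderApprox {t : ℝ} (ht : 2 ≤ t) :
    logSeries 10 (1 / (t + 1)) + 2 * (1 / (t + 1)) ^ 11 - 1 / (t + 1) <
      2 * (remainderApprox t * remainderApprox (t + 1)) := by
  obtain ⟨s, hs, rfl⟩ : ∃ s ≥ 0, t = s + 2 := ⟨t - 2, by linarith, by ring⟩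
  have h₁ : 0 < s + 2 := by positivity
  have h₂ : 0 < s + 3 := by positivity
  simp only [remainderApprox, logSeries, sum_range_succ, sum_range_zero]
  norm_num
  rw [← sub_pos]
  field_simp
  ring_nf
  positivity

lemma remainderApprox_sub_succ_le {n : ℕ} (hn : 2 ≤ n) :
    remainderApprox n - remainderApprox (n + 1 : ℕ) ≤
      harmonicRemainder n - harmonicRemainder (n + 1) := by
  have ht : (2 : ℝ) ≤ n := by exact_mod_cast hn
  have hlog := (abs_le.mp (abs_logSeries_add_log_one_sub_le (x := 1 / ((n : ℝ) + 1))
    (by positivity) (one_div_le_one_div_of_le two_pos (by linarith)) 10)).2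
  simp only [Nat.reduceAdd] at hlog
  rw [harmonicRemainder_sub_succ, Nat.cast_succ]
  linarith [remainderApprox_sub_succ_le_logSeries ht]

lemma remainderApprox_le_harmonicRemainder {n : ℕ} (hn : 2 ≤ n) :
    remainderApprox n ≤ harmonicRemainder n :=
  le_of_tendsto_of_sub_succ_le tendsto_harmonicRemainder_atTop tendsto_remainderApprox_atTop
    (fun _ hk => remainderApprox_sub_succ_le hk) hn

lemma harmonicRemainder_pos {n : ℕ} (hn : 1 ≤ n) : 0 < harmonicRemainder n := by
  rcases hn.eq_or_lt with rfl | hn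
  · rw [harmonicRemainder_one]
    linarith [eulerMascheroniConstant_lt_two_thirds]
  · have ht : (2 : ℝ) ≤ n := by exact_mod_cast hn
    exact (remainderApprox_pos (by linarith)).trans_le (remainderApprox_le_harmonicRemainder hn)

lemma harmonicRemainder_sub_succ_lt {n : ℕ} (hn : 1 ≤ n) :
    harmonicRemainder n - harmonicRemainder (n + 1) <
      2 * (harmonicRemainder n * harmonicRemainder (n + 1)) := by
  rcases hn.eq_or_lt with rfl | hn
  · have h₂ : 11 / 48 ≤ harmonicRemainder 2 := by
      have := remainderApprox_le_harmonicRemainder le_rfl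
      norm_num [remainderApprox] at this
      linarith
    have h₁ := harmonicRemainder_sub_succ 1
    norm_num at h₁ ⊢
    rw [one_div, log_inv, neg_neg] at h₁
    nlinarith [log_two_gt_d9, log_two_lt_d9]
  · have ht : (2 : ℝ) ≤ n := by exact_mod_cast hn
    have hlog := (abs_le.mp (abs_logSeries_add_log_one_sub_le (x := 1 / ((n : ℝ) + 1))
      (by positivity) (one_div_le_one_div_of_le two_pos (by linarith)) 10)).1
    simp only [Nat.reduceAdd] at hlog
    have hprod : remainderApprox n * remainderApprox (n + 1 : ℕ) ≤
        harmonicRemainder n * harmonicRemainder (n + 1) :=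
      mul_le_mul (remainderApprox_le_harmonicRemainder hn)
        (remainderApprox_le_harmonicRemainder (by omega))
        (remainderApprox_pos (by push_cast; linarith)).le (harmonicRemainder_pos (by omega)).le
    rw [harmonicRemainder_sub_succ]
    push_cast at hprod
    linarith [logSeries_lt_two_mul_remainderApprox ht]

lemma f_eq_one_div_harmonicRemainder (n : ℕ) : f n = 1 / harmonicRemainder n - 2 * n := rfl

lemma f_succ_lt {n : ℕ} (hn : 1 ≤ n) : f (n + 1) < f n := by
  have h₀ := harmonicRemainder_pos hn
  have h₁ := harmonicRemainder_pos (Nat.le_succ_of_le hn)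
  have hinv : 1 / harmonicRemainder (n + 1) - 1 / harmonicRemainder n < 2 := by
    rw [div_sub_div _ _ h₁.ne' h₀.ne', div_lt_iff₀ (by positivity)]
    linarith [harmonicRemainder_sub_succ_lt hn]
  rw [f_eq_one_div_harmonicRemainder, f_eq_one_div_harmonicRemainder]
  push_cast
  linarith

theorem stmt3 (m n : ℕ) (hm : 1 ≤ m) (hmn : m < n) : f n < f m := by
  induction n, hmn using Nat.le_induction with
  | base => exact f_succ_lt hm
  | succ n hn ih => exact (f_succ_lt (by omega)).trans ih
end

section
/- For every real x > 0, 1/x - 1/(2x²) + 1/(6x³) - 1/(30x⁵) + 1/(42x⁷) - ψ'(x+1) lies strictly between 0 and 1/(30x⁹). -/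
/-!
On `(0, ∞)`, `log Γ` is the pointwise limit of `logGammaSeq`, whose derivatives converge
uniformly on bounded intervals; this gives Gauss's series
`ψ y = -γ - 1/y + ∑ (1/(k+1) - 1/(y+k+1))`, and differentiating it termwise gives
`ψ' y = ∑ 1/(y+k)²`.

Let `F y = 1/y - 1/(2y²) + 1/(6y³) - 1/(30y⁵) + 1/(42y⁷)` and `G y = 1/(30y⁹)`. Clearing
denominators shows `0 < F y - F (y+1) - 1/(y+1)² < G y - G (y+1)` for `y > 0`. Summing over
`y = x, x+1, x+2, …`, the differences of `F` and `G` telescope (both tend to `0`) and the squares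
add up to `ψ'(x+1)`.
-/

noncomputable def digamma (x : ℝ) : ℝ := deriv (fun y => Real.log (Real.Gamma y)) x
noncomputable def trigamma (x : ℝ) : ℝ := deriv digamma x

open Filter Finset Real Topology

lemma summable_one_div_nat_add_one_sq : Summable fun k : ℕ => 1 / ((k : ℝ) + 1) ^ 2 := by
  simpa using (summable_nat_add_iff 1).2 (summable_one_div_nat_pow.2 one_lt_two)

lemma norm_one_div_sub_one_div_le {t : ℝ} (ht : 0 ≤ t) (k : ℕ) :
    ‖1 / ((k : ℝ) + 1) - 1 / (t + k + 1)‖ ≤ t * (1 / ((k : ℝ) + 1) ^ 2) := by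
  have hk : (0 : ℝ) < k + 1 := by positivity
  have h : 1 / ((k : ℝ) + 1) - 1 / (t + k + 1) = t / ((k + 1) * (t + k + 1)) := by
    field_simp
    ring
  rw [h, Real.norm_of_nonneg (by positivity)]
  calc t / ((k + 1) * (t + k + 1)) ≤ t / ((k + 1) * (k + 1)) := by
        gcongr
        linarith
    _ = t * (1 / ((k : ℝ) + 1) ^ 2) := by ring

noncomputable def digammaSeries (y : ℝ) : ℝ :=
  -eulerMascheroniConstant - 1 / y + ∑' k : ℕ, (1 / ((k : ℝ) + 1) - 1 / (y + k + 1))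

lemma hasDerivAt_logGammaSeq {t : ℝ} (ht : 0 < t) (n : ℕ) :
    HasDerivAt (fun s => BohrMollerup.logGammaSeq s n)
      (log n - ∑ m ∈ range (n + 1), 1 / (t + m)) t := by
  have hlog (m : ℕ) : HasDerivAt (fun s => log (s + m)) (1 / (t + m)) t := by
    simpa using ((hasDerivAt_id t).add_const (m : ℝ)).log (by positivity)
  unfold BohrMollerup.logGammaSeq
  simpa using (((hasDerivAt_id t).mul_const (log n)).add_const (log (n.factorial : ℕ))).fun_sub
    (HasDerivAt.fun_sum fun m _ => hlog m)

lemma tendstoUniformlyOn_deriv_logGammaSeq (b : ℝ) :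
    TendstoUniformlyOn (fun (n : ℕ) (t : ℝ) => log n - ∑ m ∈ range (n + 1), 1 / (t + m))
      digammaSeries atTop (Set.Ioo 0 b) := by
  have hderiv (n : ℕ) (t : ℝ) : log n - ∑ m ∈ range (n + 1), 1 / (t + m) =
      (log n - (harmonic n : ℝ)) - 1 / t
        + ∑ k ∈ range n, (1 / ((k : ℝ) + 1) - 1 / (t + k + 1)) := by
    rw [sum_range_succ', sum_sub_distrib, harmonic]
    push_cast
    simp only [one_div, add_zero, add_assoc]
    ring
  have hconst : Tendsto (fun n : ℕ => log n - (harmonic n : ℝ)) atTop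
      (𝓝 (-eulerMascheroniConstant)) := by
    simpa using tendsto_harmonic_sub_log.neg
  have hinv : TendstoUniformlyOn (fun (_ : ℕ) (t : ℝ) => -(1 / t)) (fun t => -(1 / t)) atTop
      (Set.Ioo 0 b) :=
    Metric.tendstoUniformlyOn_iff.2 fun ε hε => by simp [hε]
  have hseries := tendstoUniformlyOn_tsum_nat (summable_one_div_nat_add_one_sq.mul_left b)
    (f := fun k (t : ℝ) => 1 / ((k : ℝ) + 1) - 1 / (t + k + 1)) (s := Set.Ioo 0 b)
    fun k t ht => (norm_one_div_sub_one_div_le ht.1.le k).trans (by gcongr; exact ht.2.le)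
  refine (((hconst.tendstoUniformlyOn_const _).add hinv).add hseries).congr_right ?_ |>.congr ?_
  · intro t _
    simp [digammaSeries, sub_eq_add_neg]
  · filter_upwards with n t _
    simp only [Pi.add_apply, hderiv]
    ring

lemma hasDerivAt_log_Gamma {y : ℝ} (hy : 0 < y) :
    HasDerivAt (fun t => log (Gamma t)) (digammaSeries y) y :=
  hasDerivAt_of_tendstoUniformlyOn isOpen_Ioo (tendstoUniformlyOn_deriv_logGammaSeq (y + 1))
    (.of_forall fun n _ ht => hasDerivAt_logGammaSeq ht.1 n)
    (fun _ ht => BohrMollerup.tendsto_log_gamma ht.1) ⟨hy, lt_add_one y⟩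

lemma hasDerivAt_digammaSeries {y : ℝ} (hy : 0 < y) :
    HasDerivAt digammaSeries (1 / y ^ 2 + ∑' k : ℕ, 1 / (y + k + 1) ^ 2) y := by
  have hterm (k : ℕ) {t : ℝ} (ht : 0 < t) :
      HasDerivAt (fun s => 1 / ((k : ℝ) + 1) - 1 / (s + k + 1)) (1 / (t + k + 1) ^ 2) t := by
    simpa [add_assoc, neg_div] using ((hasDerivAt_id t).add_const ((k : ℝ) + 1)).inv
      (by positivity) |>.const_sub (1 / ((k : ℝ) + 1))
  have hbound (k : ℕ) (t : ℝ) (ht : t ∈ Set.Ioi 0) :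
      ‖1 / (t + k + 1) ^ 2‖ ≤ 1 / ((k : ℝ) + 1) ^ 2 := by
    rw [Real.norm_of_nonneg (by positivity)]
    gcongr
    exact le_add_of_nonneg_left ht.out.le
  have hseries := hasDerivAt_tsum_of_isPreconnected summable_one_div_nat_add_one_sq isOpen_Ioi
    isPreconnected_Ioi (fun k t ht => hterm k ht) hbound hy
    (.of_norm_bounded (summable_one_div_nat_add_one_sq.mul_left y)
      (norm_one_div_sub_one_div_le hy.le)) hy
  have hinv : HasDerivAt (fun t => -eulerMascheroniConstant - 1 / t) (1 / y ^ 2) y := by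
    simpa using (hasDerivAt_inv hy.ne').const_sub (-eulerMascheroniConstant)
  exact hinv.add hseries

lemma hasSum_trigamma {y : ℝ} (hy : 0 < y) :
    HasSum (fun k : ℕ => 1 / (y + k) ^ 2) (trigamma y) := by
  have hdigamma : digamma =ᶠ[𝓝 y] digammaSeries :=
    eventually_of_mem (Ioi_mem_nhds hy) fun t (ht : 0 < t) => (hasDerivAt_log_Gamma ht).deriv
  have htrigamma : trigamma y = 1 / y ^ 2 + ∑' k : ℕ, 1 / (y + k + 1) ^ 2 := by
    rw [trigamma, hdigamma.deriv_eq, (hasDerivAt_digammaSeries hy).deriv]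
  have htail : Summable fun k : ℕ => 1 / (y + k + 1) ^ 2 :=
    summable_one_div_nat_add_one_sq.of_nonneg_of_le (fun k => by positivity)
      fun k => by gcongr; exact le_add_of_nonneg_left hy.le
  rw [htrigamma]
  convert HasSum.zero_add (f := fun k : ℕ => 1 / (y + k) ^ 2)
    (by simpa [add_assoc] using htail.hasSum) using 2 <;> simp [add_assoc]

lemma hasSum_sub_add_one_of_tendsto_zero {f : ℝ → ℝ} (hf_anti : ∀ y, 0 < y → f (y + 1) ≤ f y)
    (hf_lim : Tendsto f atTop (𝓝 0)) {x : ℝ} (hx : 0 < x) :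
    HasSum (fun n : ℕ => f (x + n) - f (x + n + 1)) (f x) := by
  rw [hasSum_iff_tendsto_nat_of_nonneg fun n => sub_nonneg.2 (hf_anti _ (by positivity))]
  have hpartial (n : ℕ) : ∑ i ∈ range n, (f (x + i) - f (x + i + 1)) = f x - f (x + n) := by
    simpa [add_assoc] using sum_range_sub' (fun i : ℕ => f (x + i)) n
  simp_rw [hpartial]
  have hshift : Tendsto (fun n : ℕ => x + n) atTop atTop :=
    tendsto_atTop_add_const_left _ x tendsto_natCast_atTop_atTop
  simpa using (hf_lim.comp hshift).const_sub (f x)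

lemma tendsto_one_div_mul_pow_atTop {c : ℝ} (hc : 0 < c) {p : ℕ} (hp : p ≠ 0) :
    Tendsto (fun y : ℝ => 1 / (c * y ^ p)) atTop (𝓝 0) :=
  tendsto_const_nhds.div_atTop ((tendsto_pow_atTop hp).const_mul_atTop hc)

/-- The asymptotic series `1/y - 1/(2y²) + ∑ B₂ₖ / y^(2k+1)` of `ψ'(y + 1)`, cut off before the
term `B₈ / y⁹ = -1/(30 y⁹)`. -/
noncomputable def trigammaApprox (y : ℝ) : ℝ :=
  1 / y - 1 / (2 * y ^ 2) + 1 / (6 * y ^ 3) - 1 / (30 * y ^ 5) + 1 / (42 * y ^ 7)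

lemma tendsto_trigammaApprox_atTop : Tendsto trigammaApprox atTop (𝓝 0) := by
  have h (c : ℝ) (hc : 0 < c) (p : ℕ) (hp : p ≠ 0) := tendsto_one_div_mul_pow_atTop hc hp
  convert ((((h 1 one_pos 1 one_ne_zero).sub (h 2 two_pos 2 two_ne_zero)).add
    (h 6 (by norm_num) 3 (by norm_num))).sub (h 30 (by norm_num) 5 (by norm_num))).add
    (h 42 (by norm_num) 7 (by norm_num)) using 1
  · ext y
    simp [trigammaApprox]
  · norm_num

lemma one_div_sq_lt_trigammaApprox_sub {y : ℝ} (hy : 0 < y) :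
    1 / (y + 1) ^ 2 < trigammaApprox y - trigammaApprox (y + 1) := by
  have key : trigammaApprox y - trigammaApprox (y + 1) - 1 / (y + 1) ^ 2
      = (3/10 * y^4 + 3/5 * y^3 + 7/15 * y^2 + 1/6 * y + 1/42) / (y^7 * (y + 1)^7) := by
    unfold trigammaApprox
    field_simp
    ring
  have : 0 < trigammaApprox y - trigammaApprox (y + 1) - 1 / (y + 1) ^ 2 := by
    rw [key]; positivity
  linarith

lemma trigammaApprox_sub_sub_lt {y : ℝ} (hy : 0 < y) :
    trigammaApprox y - trigammaApprox (y + 1) - 1 / (y + 1) ^ 2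
      < 1 / (30 * y ^ 9) - 1 / (30 * (y + 1) ^ 9) := by
  have key : 1 / (30 * y ^ 9) - 1 / (30 * (y + 1) ^ 9)
        - (trigammaApprox y - trigammaApprox (y + 1) - 1 / (y + 1) ^ 2)
      = (5/6 * y^6 + 5/2 * y^5 + 709/210 * y^4 + 181/70 * y^3 + 247/210 * y^2 + 3/10 * y + 1/30)
        / (y^9 * (y + 1)^9) := by
    unfold trigammaApprox
    field_simp
    ring
  have : 0 < 1 / (30 * y ^ 9) - 1 / (30 * (y + 1) ^ 9)
      - (trigammaApprox y - trigammaApprox (y + 1) - 1 / (y + 1) ^ 2) := by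
    rw [key]; positivity
  linarith

theorem stmt9 (x : ℝ) (hx : 0 < x) :
    0 < 1 / x - 1 / (2 * x ^ 2) + 1 / (6 * x ^ 3) - 1 / (30 * x ^ 5) + 1 / (42 * x ^ 7)
        - trigamma (x + 1) ∧
    1 / x - 1 / (2 * x ^ 2) + 1 / (6 * x ^ 3) - 1 / (30 * x ^ 5) + 1 / (42 * x ^ 7)
        - trigamma (x + 1) < 1 / (30 * x ^ 9) := by
  have hF := hasSum_sub_add_one_of_tendsto_zero
    (fun y hy => by
      have : 0 < 1 / (y + 1) ^ 2 := by positivity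
      linarith [one_div_sq_lt_trigammaApprox_sub hy])
    tendsto_trigammaApprox_atTop hx
  have hG := hasSum_sub_add_one_of_tendsto_zero (f := fun y => 1 / (30 * y ^ 9))
    (fun y hy => by linarith [trigammaApprox_sub_sub_lt hy, one_div_sq_lt_trigammaApprox_sub hy])
    (tendsto_one_div_mul_pow_atTop (by norm_num) (by norm_num)) hx
  have hT : HasSum (fun n : ℕ => 1 / (x + n + 1) ^ 2) (trigamma (x + 1)) := by
    simpa only [add_right_comm x 1] using hasSum_trigamma (add_pos hx one_pos)
  have hD := hF.sub hT
  have hD_pos (n : ℕ) := sub_pos.2 (one_div_sq_lt_trigammaApprox_sub (y := x + n) (by positivity))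
  have hD_lt (n : ℕ) := trigammaApprox_sub_sub_lt (y := x + n) (by positivity)
  change 0 < trigammaApprox x - trigamma (x + 1) ∧
    trigammaApprox x - trigamma (x + 1) < 1 / (30 * x ^ 9)
  exact ⟨hasSum_lt (fun n => (hD_pos n).le) (hD_pos 0) hasSum_zero hD,
    hasSum_lt (fun n => (hD_lt n).le) (hD_lt 0) hD hG⟩
end

section
/- For every real x > 0, 1/(3x(x+1)) - 1/(15x²(x+1)²) < 2ψ(x+1) - ln(x(x+1)) < 1/(3x(x+1)) - 1/(15x²(x+1)²) + 8/(315x³(x+1)³). -/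
open Real Set Filter Topology

theorem pos_of_add_one_lt_of_tendsto_zero {f : ℝ → ℝ} {y : ℝ}
    (hf : ∀ z, y ≤ z → f (z + 1) < f z) (hlim : Tendsto f atTop (𝓝 0)) : 0 < f y := by
  have hanti : StrictAnti fun n : ℕ => f (y + n) := strictAnti_nat_of_succ_lt fun n => by
    simpa [add_assoc] using hf (y + n) (by simp)
  have hseq : Tendsto (fun n : ℕ => f (y + n)) atTop (𝓝 0) :=
    hlim.comp (tendsto_atTop_add_const_left _ y tendsto_natCast_atTop_atTop)
  calc 0 ≤ f (y + (1 : ℕ)) := hanti.antitone.le_of_tendsto hseq 1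
    _ < f y := by simpa using hanti Nat.zero_lt_one

theorem sum_range_lt_log_one_add_sub_log_one_sub {x : ℝ} (h0 : 0 < x) (h1 : x < 1) (n : ℕ) :
    ∑ k ∈ Finset.range n, 2 * (1 / (2 * k + 1)) * x ^ (2 * k + 1)
      < log (1 + x) - log (1 - x) := by
  calc _ < ∑ k ∈ Finset.range (n + 1), 2 * (1 / (2 * k + 1)) * x ^ (2 * k + 1) := by
        rw [Finset.sum_range_succ]
        exact lt_add_of_pos_right _ (by positivity)
    _ ≤ _ := sum_le_hasSum _ (fun _ _ => by positivity)
        (hasSum_log_sub_log_of_abs_lt_one (abs_lt.mpr ⟨by linarith, h1⟩))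

theorem log_one_add_sub_log_one_sub_lt {x : ℝ} (h0 : 0 < x) (h1 : x < 1) (n : ℕ) :
    log (1 + x) - log (1 - x) < ∑ k ∈ Finset.range n, 2 * (1 / (2 * k + 1)) * x ^ (2 * k + 1)
      + 2 * x ^ (2 * n + 1) / ((2 * n + 1) * (1 - x ^ 2)) := by
  have htail := (hasSum_nat_add_iff' n).mpr
    (hasSum_log_sub_log_of_abs_lt_one (abs_lt.mpr ⟨by linarith, h1⟩))
  -- the tail is dominated termwise by a geometric series of ratio `x ^ 2`
  have hx2 : x ^ 2 < 1 := by nlinarith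
  have hgeom := ((hasSum_geometric_of_lt_one (sq_nonneg x) hx2).mul_left
    (2 * x ^ (2 * n + 1))).mul_right (1 / (2 * (n : ℝ) + 1))
  have hterm (k : ℕ) : 2 * (1 / (2 * ((k + n : ℕ) : ℝ) + 1)) * x ^ (2 * (k + n) + 1)
      = 2 * x ^ (2 * n + 1) * (x ^ 2) ^ k * (1 / (2 * (k + n) + 1)) := by
    push_cast; ring
  have hlt := hasSum_lt (i := 1) (fun k => ?_) ?_ htail hgeom
  · rw [sub_lt_iff_lt_add'] at hlt
    exact hlt.trans_eq (by congr 1; field_simp)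
  · rw [hterm]
    gcongr
    linarith
  · simp only [hterm]
    gcongr
    norm_num

lemma differentiableAt_log_Gamma {x : ℝ} (hx : 0 < x) :
    DifferentiableAt ℝ (fun y => log (Gamma y)) x :=
  (differentiableAt_Gamma fun m => by linarith [(m.cast_nonneg : (0 : ℝ) ≤ m)]).log
    (Gamma_pos_of_pos hx).ne'

lemma log_Gamma_add_one {x : ℝ} (hx : 0 < x) : log (Gamma (x + 1)) = log (Gamma x) + log x := by
  rw [Gamma_add_one hx.ne', log_mul hx.ne' (Gamma_pos_of_pos hx).ne', add_comm]

lemma digamma_add_one {x : ℝ} (hx : 0 < x) : digamma (x + 1) = digamma x + x⁻¹ := by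
  unfold digamma
  rw [← deriv_comp_add_const, ← deriv_log,
    ← deriv_add (differentiableAt_log_Gamma hx) (differentiableAt_log hx.ne')]
  apply EventuallyEq.deriv_eq
  filter_upwards [eventually_gt_nhds hx] with y hy using log_Gamma_add_one hy

-- `log ∘ Gamma` is convex, so its derivative at `x + 1` lies between its slopes on
-- `[x, x + 1]` and on `[x + 1, x + 2]`, which are `log x` and `log (x + 1)`.
lemma log_le_digamma_add_one {x : ℝ} (hx : 0 < x) : log x ≤ digamma (x + 1) := by
  refine (le_of_eq ?_).trans <| convexOn_log_Gamma.slope_le_deriv (mem_Ioi.mpr hx)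
    (by simp only [mem_Ioi]; linarith) (by linarith) (differentiableAt_log_Gamma (by linarith))
  rw [slope_def_field, Function.comp_apply, Function.comp_apply, log_Gamma_add_one hx]
  ring

lemma digamma_add_one_le_log_add_one {x : ℝ} (hx : 0 < x) : digamma (x + 1) ≤ log (x + 1) := by
  have hx1 : 0 < x + 1 := by linarith
  refine (convexOn_log_Gamma.deriv_le_slope (mem_Ioi.mpr hx1) (by simp only [mem_Ioi]; linarith)
    (lt_add_one _) (differentiableAt_log_Gamma hx1)).trans (le_of_eq ?_)
  rw [slope_def_field, Function.comp_apply, Function.comp_apply, log_Gamma_add_one hx1]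
  ring

lemma tendsto_two_mul_digamma_add_one_sub_log :
    Tendsto (fun x => 2 * digamma (x + 1) - log (x * (x + 1))) atTop (𝓝 0) := by
  have hlog : Tendsto (fun x : ℝ => log (1 + x⁻¹)) atTop (𝓝 0) := by
    simpa [Function.comp_def] using (continuousAt_log one_ne_zero).tendsto.comp
      (by simpa using tendsto_inv_atTop_zero.const_add (1 : ℝ))
  refine tendsto_of_tendsto_of_tendsto_of_le_of_le' (by simpa using hlog.neg) hlog ?_ ?_ <;>
  filter_upwards [eventually_gt_atTop 0] with x hx <;>
  · have hx1 : 0 < x + 1 := by linarith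
    rw [log_mul hx.ne' hx1.ne', show 1 + x⁻¹ = (x + 1) / x by field_simp,
      log_div hx1.ne' hx.ne']
    linarith [log_le_digamma_add_one hx, digamma_add_one_le_log_add_one hx]

lemma tendsto_const_div_mul_pow_mul_add_one_pow (c : ℝ) {d : ℝ} (hd : 0 < d) {k : ℕ}
    (hk : k ≠ 0) : Tendsto (fun x : ℝ => c / (d * x ^ k * (x + 1) ^ k)) atTop (𝓝 0) :=
  tendsto_const_nhds.div_atTop <| ((tendsto_pow_atTop hk).const_mul_atTop hd).atTop_mul_atTop₀
    ((tendsto_pow_atTop hk).comp (tendsto_atTop_add_const_right _ 1 tendsto_id))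

noncomputable def digammaApprox (x : ℝ) : ℝ :=
  1 / (3 * x * (x + 1)) - 1 / (15 * x ^ 2 * (x + 1) ^ 2)

noncomputable def digammaNextTerm (x : ℝ) : ℝ := 8 / (315 * x ^ 3 * (x + 1) ^ 3)

noncomputable def digammaError (x : ℝ) : ℝ :=
  2 * digamma (x + 1) - log (x * (x + 1)) - digammaApprox x

lemma tendsto_digammaApprox : Tendsto digammaApprox atTop (𝓝 0) := by
  have h3 := tendsto_const_div_mul_pow_mul_add_one_pow 1 (by norm_num : (0 : ℝ) < 3) one_ne_zero
  have h15 := tendsto_const_div_mul_pow_mul_add_one_pow 1 (by norm_num : (0 : ℝ) < 15) two_ne_zero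
  have h := h3.sub h15
  simp only [pow_one, sub_zero] at h
  exact h

lemma tendsto_digammaNextTerm : Tendsto digammaNextTerm atTop (𝓝 0) :=
  tendsto_const_div_mul_pow_mul_add_one_pow 8 (by norm_num) three_ne_zero

lemma tendsto_digammaError : Tendsto digammaError atTop (𝓝 0) := by
  have h := tendsto_two_mul_digamma_add_one_sub_log.sub tendsto_digammaApprox
  rw [sub_zero] at h
  exact h

lemma digammaError_sub_digammaError_add_one {y : ℝ} (hy : 0 < y) :
    digammaError y - digammaError (y + 1) = log (1 + (y + 1)⁻¹) - log (1 - (y + 1)⁻¹)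
      - 2 * (y + 1)⁻¹ - (digammaApprox y - digammaApprox (y + 1)) := by
  have hy1 : 0 < y + 1 := by linarith
  have hy2 : 0 < y + 2 := by linarith
  rw [show 1 + (y + 1)⁻¹ = (y + 2) / (y + 1) by field_simp; ring,
    show 1 - (y + 1)⁻¹ = y / (y + 1) by field_simp; ring]
  unfold digammaError
  rw [digamma_add_one hy1, show y + 1 + 1 = y + 2 by ring, log_mul hy.ne' hy1.ne',
    log_mul hy1.ne' hy2.ne', log_div hy2.ne' hy1.ne', log_div hy.ne' hy1.ne']
  ring

lemma digammaApprox_sub_lt_log_sub {y : ℝ} (hy : 0 < y) :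
    digammaApprox y - digammaApprox (y + 1)
      < log (1 + (y + 1)⁻¹) - log (1 - (y + 1)⁻¹) - 2 * (y + 1)⁻¹ := by
  have ht : (y + 1)⁻¹ < 1 := inv_lt_one_of_one_lt₀ (by linarith)
  refine lt_of_lt_of_le ?_ (sub_le_sub_right
    (sum_range_lt_log_one_add_sub_log_one_sub (by positivity) ht 4).le _)
  have hpoly : 0 < (28 + 28 * y + 78 * y ^ 2 + 64 * y ^ 3 + 16 * y ^ 4)
      / (105 * y ^ 2 * (y + 1) ^ 7 * (y + 2) ^ 2) := by positivity
  rw [← sub_pos]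
  refine hpoly.trans_eq ?_
  simp only [Finset.sum_range_succ, Finset.sum_range_zero, digammaApprox]
  push_cast
  field_simp
  ring

lemma log_sub_lt_digammaApprox_sub_add_digammaNextTerm_sub {y : ℝ} (hy : 0 < y) :
    log (1 + (y + 1)⁻¹) - log (1 - (y + 1)⁻¹) - 2 * (y + 1)⁻¹
      < digammaApprox y - digammaApprox (y + 1)
        + (digammaNextTerm y - digammaNextTerm (y + 1)) := by
  have ht : (y + 1)⁻¹ < 1 := inv_lt_one_of_one_lt₀ (by linarith)
  refine lt_of_lt_of_le
    (sub_lt_sub_right (log_one_add_sub_log_one_sub_lt (by positivity) ht 3) _) ?_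
  have hpoly : 0 < (64 + 184 * y + 204 * y ^ 2 + 112 * y ^ 3 + 28 * y ^ 4)
      / (315 * y ^ 3 * (y + 1) ^ 7 * (y + 2) ^ 3) := by positivity
  rw [← sub_nonneg]
  refine hpoly.le.trans_eq ?_
  rw [show 1 - (y + 1)⁻¹ ^ 2 = y * (y + 2) / (y + 1) ^ 2 by field_simp; ring]
  simp only [Finset.sum_range_succ, Finset.sum_range_zero, digammaApprox, digammaNextTerm]
  push_cast
  field_simp
  ring

lemma digammaError_pos {x : ℝ} (hx : 0 < x) : 0 < digammaError x := by
  refine pos_of_add_one_lt_of_tendsto_zero (fun z hz => ?_) tendsto_digammaError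
  have hz0 : 0 < z := hx.trans_le hz
  linarith [digammaError_sub_digammaError_add_one hz0, digammaApprox_sub_lt_log_sub hz0]

lemma digammaError_lt_digammaNextTerm {x : ℝ} (hx : 0 < x) :
    digammaError x < digammaNextTerm x := by
  refine sub_pos.mp <| pos_of_add_one_lt_of_tendsto_zero
    (f := fun z => digammaNextTerm z - digammaError z) (fun z hz => ?_)
    (by simpa using tendsto_digammaNextTerm.sub tendsto_digammaError)
  have hz0 : 0 < z := hx.trans_le hz
  linarith [digammaError_sub_digammaError_add_one hz0,
    log_sub_lt_digammaApprox_sub_add_digammaNextTerm_sub hz0]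

theorem stmt10 (x : ℝ) (hx : 0 < x) :
    1 / (3 * x * (x + 1)) - 1 / (15 * x ^ 2 * (x + 1) ^ 2)
      < 2 * digamma (x + 1) - Real.log (x * (x + 1)) ∧
    2 * digamma (x + 1) - Real.log (x * (x + 1))
      < 1 / (3 * x * (x + 1)) - 1 / (15 * x ^ 2 * (x + 1) ^ 2)
        + 8 / (315 * x ^ 3 * (x + 1) ^ 3) := by
  have hlower := digammaError_pos hx
  have hupper := digammaError_lt_digammaNextTerm hx
  simp only [digammaError, digammaApprox, digammaNextTerm] at hlower hupper
  constructor <;> linarith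
end

section
/- For every real x > 0, 1/(x+1/2) - 1/x + 1/(2x²) - 1/(6x³) + 1/(30x⁵) - 1/(42x⁷) < 1/(x+1/2) - ψ'(x+1) < 1/(x+1/2) - 1/x + 1/(2x²) - 1/(6x³) + 1/(30x⁵). -/
/-!
Differentiating Euler's limit `log Γ(x) = lim (x log n + log n! - ∑_{m ≤ n} log (x + m))` twice,
locally uniformly on `(0, ∞)`, gives `ψ'(x) = ∑_{m ≥ 0} 1 / (x + m)²`. For the truncations `L`, `U`
of the asymptotic expansion of `ψ'(x + 1)`, clearing denominators shows
`L(y) - L(y + 1) < 1 / (y + 1)² < U(y) - U(y + 1)` for `y > 0`. Since `L` and `U` vanish at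
infinity, summing these telescoping inequalities over `y = x + m` puts `ψ'(x + 1)` strictly
between `L(x)` and `U(x)`.
-/

open Filter Topology Finset Set Real

theorem tsum_lt_of_lt_sub_succ {u U : ℕ → ℝ} (hu : Summable u) (hU : Tendsto U atTop (𝓝 0))
    (h : ∀ m, u m < U m - U (m + 1)) : ∑' m, u m < U 0 := by
  have hgap_pos (m : ℕ) : 0 < U m - U (m + 1) - u m := sub_pos.2 (h m)
  have hpartial : Tendsto (fun n => ∑ m ∈ range n, (U m - U (m + 1) - u m)) atTop
      (𝓝 (U 0 - ∑' m, u m)) := by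
    have hsum (n : ℕ) :
        ∑ m ∈ range n, (U m - U (m + 1) - u m) = U 0 - U n - ∑ m ∈ range n, u m := by
      rw [sum_sub_distrib, sum_range_sub']
    simpa only [hsum, sub_zero] using (tendsto_const_nhds.sub hU).sub hu.hasSum.tendsto_sum_nat
  have hgap : HasSum (fun m => U m - U (m + 1) - u m) (U 0 - ∑' m, u m) :=
    (hasSum_iff_tendsto_nat_of_nonneg (fun m => (hgap_pos m).le) _).2 hpartial
  exact sub_pos.1 (hasSum_lt (fun m => (hgap_pos m).le) (hgap_pos 0) hasSum_zero hgap)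

theorem lt_tsum_of_sub_succ_lt {u L : ℕ → ℝ} (hu : Summable u) (hL : Tendsto L atTop (𝓝 0))
    (h : ∀ m, L m - L (m + 1) < u m) : L 0 < ∑' m, u m := by
  have := tsum_lt_of_lt_sub_succ hu.neg (by simpa using hL.neg) fun m => by linarith [h m]
  rw [tsum_neg] at this
  linarith

theorem summable_inv_add_sq (x : ℝ) : Summable fun m : ℕ => ((x + m) ^ 2)⁻¹ :=
  ((Real.summable_one_div_nat_add_rpow x 2).2 one_lt_two).congr fun m => by
    rw [Real.rpow_two, sq_abs, add_comm, one_div]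

theorem tendstoLocallyUniformlyOn_Ioi_of_Icc {ι β : Type*} [UniformSpace β] {p : Filter ι}
    {F : ι → ℝ → β} {f : ℝ → β} {c : ℝ}
    (h : ∀ a b, c < a → TendstoUniformlyOn F f p (Icc a b)) :
    TendstoLocallyUniformlyOn F f p (Ioi c) :=
  tendstoLocallyUniformlyOn_of_forall_exists_nhds fun x (hx : c < x) =>
    ⟨Icc ((c + x) / 2) (x + 1),
      mem_nhdsWithin_of_mem_nhds (Icc_mem_nhds (by linarith) (by linarith)),
      h _ _ (by linarith)⟩

noncomputable def digammaSeq (n : ℕ) (x : ℝ) : ℝ :=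
  log n - ∑ m ∈ range (n + 1), (x + m)⁻¹

theorem hasDerivAt_logGammaSeq_s12 (n : ℕ) {x : ℝ} (hx : 0 < x) :
    HasDerivAt (BohrMollerup.logGammaSeq · n) (digammaSeq n x) x := by
  have hlog : HasDerivAt (fun y : ℝ => ∑ m ∈ range (n + 1), log (y + m))
      (∑ m ∈ range (n + 1), (x + m)⁻¹) x :=
    HasDerivAt.fun_sum fun m _ => by
      simpa using ((hasDerivAt_id x).add_const (m : ℝ)).log (by positivity)
  unfold BohrMollerup.logGammaSeq digammaSeq
  simpa using ((hasDerivAt_mul_const (log n)).add_const (log n.factorial)).fun_sub hlog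

theorem hasDerivAt_digammaSeq (n : ℕ) {x : ℝ} (hx : 0 < x) :
    HasDerivAt (digammaSeq n) (∑ m ∈ range (n + 1), ((x + m) ^ 2)⁻¹) x := by
  have hinv : HasDerivAt (fun y : ℝ => ∑ m ∈ range (n + 1), (y + m)⁻¹)
      (∑ m ∈ range (n + 1), -((x + m) ^ 2)⁻¹) x :=
    HasDerivAt.fun_sum fun m _ => by
      simpa [div_eq_mul_inv, Pi.inv_def] using
        ((hasDerivAt_id x).add_const (m : ℝ)).inv (by positivity)
  unfold digammaSeq
  simpa using hinv.const_sub (log n)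

-- Splitting off the harmonic numbers leaves a series whose terms are `O(1 / m²)` uniformly on
-- compact subsets of `(0, ∞)`.
theorem digammaSeq_eq (n : ℕ) (x : ℝ) :
    digammaSeq n x =
      -(harmonic n - log n) + (-x⁻¹ + ∑ m ∈ range n, (((m : ℝ) + 1)⁻¹ - (x + m + 1)⁻¹)) := by
  rw [digammaSeq, sum_range_succ', sum_sub_distrib, harmonic]
  push_cast
  simp only [add_assoc, add_zero]
  ring

theorem abs_inv_add_one_sub_inv_le {m : ℕ} {x b : ℝ} (hx : 0 ≤ x) (hxb : x ≤ b) :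
    |((m : ℝ) + 1)⁻¹ - (x + m + 1)⁻¹| ≤ b * ((1 + (m : ℝ)) ^ 2)⁻¹ := by
  have hm : (0 : ℝ) < m + 1 := by positivity
  rw [abs_of_nonneg (sub_nonneg.2 (inv_anti₀ hm (by linarith))),
    inv_sub_inv hm.ne' (by positivity), add_comm 1 (m : ℝ), ← div_eq_mul_inv]
  exact div_le_div₀ (by linarith) (by linarith) (by positivity) (by nlinarith)

theorem tendstoUniformlyOn_digammaSeq {a : ℝ} (b : ℝ) (ha : 0 < a) :
    TendstoUniformlyOn digammaSeq
      (fun x => -eulerMascheroniConstant + (-x⁻¹ + ∑' m : ℕ, (((m : ℝ) + 1)⁻¹ - (x + m + 1)⁻¹)))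
      atTop (Icc a b) := by
  have hconst : TendstoUniformlyOn (fun (n : ℕ) (_ : ℝ) => -(harmonic n - log n))
      (fun _ => -eulerMascheroniConstant) atTop (Icc a b) :=
    tendsto_harmonic_sub_log.neg.tendstoUniformlyOn_const _
  have hinv : TendstoUniformlyOn (fun (_ : ℕ) (x : ℝ) => -x⁻¹) (fun x => -x⁻¹) atTop (Icc a b) :=
    fun _ hu => Eventually.of_forall fun _ _ _ => refl_mem_uniformity hu
  have hseries := tendstoUniformlyOn_tsum_nat ((summable_inv_add_sq 1).mul_left b)
    (f := fun (m : ℕ) (x : ℝ) => ((m : ℝ) + 1)⁻¹ - (x + m + 1)⁻¹) (s := Icc a b)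
    fun m x hx => abs_inv_add_one_sub_inv_le (ha.le.trans hx.1) hx.2
  exact (hconst.add (hinv.add hseries)).congr (Eventually.of_forall fun n x _ =>
    (digammaSeq_eq n x).symm)

theorem tendsto_digammaSeq {x : ℝ} (hx : 0 < x) :
    Tendsto (fun n => digammaSeq n x) atTop (𝓝 (digamma x)) := by
  have hlim :=
    tendstoLocallyUniformlyOn_Ioi_of_Icc fun _ b ha => tendstoUniformlyOn_digammaSeq b ha
  have hderiv := hasDerivAt_of_tendstoLocallyUniformlyOn isOpen_Ioi hlim
    (Eventually.of_forall fun n _ hy => hasDerivAt_logGammaSeq_s12 n hy)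
    (fun _ hy => BohrMollerup.tendsto_log_gamma hy) hx
  rw [digamma, hderiv.deriv]
  exact hlim.tendsto_at hx

theorem tendstoUniformlyOn_sum_inv_add_sq {a : ℝ} (b : ℝ) (ha : 0 < a) :
    TendstoUniformlyOn (fun n (x : ℝ) => ∑ m ∈ range (n + 1), ((x + m) ^ 2)⁻¹)
      (fun x : ℝ => ∑' m : ℕ, ((x + m) ^ 2)⁻¹) atTop (Icc a b) := by
  have hbound (m : ℕ) (x : ℝ) (hx : x ∈ Icc a b) : ‖((x + m) ^ 2)⁻¹‖ ≤ ((a + m) ^ 2)⁻¹ := by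
    have hxm : 0 ≤ x + m := by linarith [hx.1, (m.cast_nonneg : (0 : ℝ) ≤ m)]
    rw [norm_inv, norm_pow, Real.norm_of_nonneg hxm]
    gcongr
    exact hx.1
  exact fun v hv => (tendsto_finset_range.comp (tendsto_add_atTop_nat 1)).eventually
    (tendstoUniformlyOn_tsum (summable_inv_add_sq a) hbound v hv)

theorem hasDerivAt_digamma {x : ℝ} (hx : 0 < x) :
    HasDerivAt digamma (∑' m : ℕ, ((x + m) ^ 2)⁻¹) x :=
  hasDerivAt_of_tendstoLocallyUniformlyOn isOpen_Ioi
    (tendstoLocallyUniformlyOn_Ioi_of_Icc fun _ b ha => tendstoUniformlyOn_sum_inv_add_sq b ha)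
    (Eventually.of_forall fun n _ hy => hasDerivAt_digammaSeq n hy)
    (fun _ hy => tendsto_digammaSeq hy) hx

theorem trigamma_eq_tsum {x : ℝ} (hx : 0 < x) : trigamma x = ∑' m : ℕ, ((x + m) ^ 2)⁻¹ :=
  (hasDerivAt_digamma hx).deriv

-- Truncations of the asymptotic expansion `ψ'(x + 1) ~ 1/x - 1/(2x²) + ∑ₖ B₂ₖ / x^(2k+1)`
-- (`B₂ = 1/6`, `B₄ = -1/30`, `B₆ = 1/42`) after the `B₄` and the `B₆` term.
noncomputable def trigammaLower (x : ℝ) : ℝ :=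
  1 / x - 1 / (2 * x ^ 2) + 1 / (6 * x ^ 3) - 1 / (30 * x ^ 5)

noncomputable def trigammaUpper (x : ℝ) : ℝ :=
  trigammaLower x + 1 / (42 * x ^ 7)

theorem trigammaLower_sub_trigammaLower_add_one_lt {y : ℝ} (hy : 0 < y) :
    trigammaLower y - trigammaLower (y + 1) < ((y + 1) ^ 2)⁻¹ := by
  have hdiff : ((y + 1) ^ 2)⁻¹ - (trigammaLower y - trigammaLower (y + 1)) =
      (150 * y ^ 4 + 450 * y ^ 3 + 480 * y ^ 2 + 210 * y + 30) / (900 * y ^ 5 * (y + 1) ^ 7) := by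
    unfold trigammaLower
    field_simp
    ring
  rw [← sub_pos, hdiff]
  positivity

theorem lt_trigammaUpper_sub_trigammaUpper_add_one {y : ℝ} (hy : 0 < y) :
    ((y + 1) ^ 2)⁻¹ < trigammaUpper y - trigammaUpper (y + 1) := by
  have hdiff : trigammaUpper y - trigammaUpper (y + 1) - ((y + 1) ^ 2)⁻¹ =
      (13230 * y ^ 6 + 52920 * y ^ 5 + 86730 * y ^ 4 + 74970 * y ^ 3 + 36330 * y ^ 2
        + 9450 * y + 1050) / (44100 * y ^ 7 * (y + 1) ^ 9) := by
    unfold trigammaUpper trigammaLower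
    field_simp
    ring
  rw [← sub_pos, hdiff]
  positivity

theorem tendsto_one_div_const_mul_pow_atTop {c : ℝ} (hc : 0 < c) {k : ℕ} (hk : k ≠ 0) :
    Tendsto (fun x : ℝ => 1 / (c * x ^ k)) atTop (𝓝 0) :=
  tendsto_const_nhds.div_atTop ((tendsto_pow_atTop hk).const_mul_atTop hc)

theorem tendsto_trigammaLower_atTop : Tendsto trigammaLower atTop (𝓝 0) := by
  convert (((tendsto_one_div_const_mul_pow_atTop one_pos one_ne_zero).sub
      (tendsto_one_div_const_mul_pow_atTop two_pos two_ne_zero)).add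
      (tendsto_one_div_const_mul_pow_atTop (c := 6) (k := 3) (by norm_num) (by norm_num))).sub
      (tendsto_one_div_const_mul_pow_atTop (c := 30) (k := 5) (by norm_num) (by norm_num))
    using 2 <;> simp [trigammaLower]

theorem tendsto_trigammaUpper_atTop : Tendsto trigammaUpper atTop (𝓝 0) := by
  have h := tendsto_trigammaLower_atTop.add
    (tendsto_one_div_const_mul_pow_atTop (c := 42) (k := 7) (by norm_num) (by norm_num))
  rwa [add_zero] at h

theorem tendsto_comp_add_natCast {f : ℝ → ℝ} {l : Filter ℝ} (hf : Tendsto f atTop l) (x : ℝ) :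
    Tendsto (fun n : ℕ => f (x + n)) atTop l :=
  hf.comp (tendsto_atTop_add_const_left _ x tendsto_natCast_atTop_atTop)

theorem trigammaLower_lt_trigamma_add_one {x : ℝ} (hx : 0 < x) :
    trigammaLower x < trigamma (x + 1) := by
  rw [trigamma_eq_tsum (by positivity)]
  simpa using lt_tsum_of_sub_succ_lt (L := fun m : ℕ => trigammaLower (x + m))
    (summable_inv_add_sq (x + 1)) (tendsto_comp_add_natCast tendsto_trigammaLower_atTop x)
    fun m => by
      rw [add_right_comm x 1, Nat.cast_succ, ← add_assoc]
      exact trigammaLower_sub_trigammaLower_add_one_lt (by positivity)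

theorem trigamma_add_one_lt_trigammaUpper {x : ℝ} (hx : 0 < x) :
    trigamma (x + 1) < trigammaUpper x := by
  rw [trigamma_eq_tsum (by positivity)]
  simpa using tsum_lt_of_lt_sub_succ (U := fun m : ℕ => trigammaUpper (x + m))
    (summable_inv_add_sq (x + 1)) (tendsto_comp_add_natCast tendsto_trigammaUpper_atTop x)
    fun m => by
      rw [add_right_comm x 1, Nat.cast_succ, ← add_assoc]
      exact lt_trigammaUpper_sub_trigammaUpper_add_one (by positivity)

theorem stmt12 (x : ℝ) (hx : 0 < x) :
    1 / (x + 1 / 2) - 1 / x + 1 / (2 * x ^ 2) - 1 / (6 * x ^ 3) + 1 / (30 * x ^ 5)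
        - 1 / (42 * x ^ 7)
      < 1 / (x + 1 / 2) - trigamma (x + 1) ∧
    1 / (x + 1 / 2) - trigamma (x + 1)
      < 1 / (x + 1 / 2) - 1 / x + 1 / (2 * x ^ 2) - 1 / (6 * x ^ 3) + 1 / (30 * x ^ 5) := by
  have hlower := trigammaLower_lt_trigamma_add_one hx
  have hupper := trigamma_add_one_lt_trigammaUpper hx
  unfold trigammaUpper trigammaLower at *
  constructor <;> linarith
end
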